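/- For every multi-relational database D = (E, t, 𝓡, R), the set system F_D of complete connected subsets of E is strongly accessible: it is accessible (for every nonempty X ∈ F_D there is e ∈ X with X \ {e} ∈ F_D), and for all X, Y ∈ F_D with X ⊊ Y there exists e ∈ Y \ X with X ∪ {e} ∈ F_D. -/

import Mathlib

/-- A multi-relational database over a finite entity set E: entities are
partitioned into k types by t; RT is the set of relationship types (unordered
pairs of distinct types); rel is the union of the binary relationships
(unordered pairs of entities whose pair of types is a relationship type). -/
structure MRD (E : Type*) (k : ℕ) where
  t : E → Fin k
  RT : Set (Sym2 (Fin k))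
  RT_not_diag : ∀ p ∈ RT, ¬ p.IsDiag
  rel : Set (Sym2 E)
  rel_types : ∀ p ∈ rel, p.map t ∈ RT

namespace MRD

variable {E : Type*} {k : ℕ}

/-- A set F is complete if any two of its entities whose pair of types is a
relationship type are related. -/
def Complete (D : MRD E k) (F : Set E) : Prop :=
  ∀ e ∈ F, ∀ e' ∈ F, s(D.t e, D.t e') ∈ D.RT → s(e, e') ∈ D.rel

/-- A set F is connected if any two of its elements are joined by a path inside
F whose consecutive elements form pairs in rel. -/
def Connected (D : MRD E k) (F : Set E) : Prop :=
  ∀ e ∈ F, ∀ e' ∈ F,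
    Relation.ReflTransGen (fun a b => a ∈ F ∧ b ∈ F ∧ s(a, b) ∈ D.rel) e e'

/-- A complete connected subset. -/
def CCS (D : MRD E k) (F : Set E) : Prop :=
  D.Complete F ∧ D.Connected F

/-- A maximal complete connected subset: a CCS to which no element can be added
remaining a CCS. -/
def MCCS (D : MRD E k) (F : Set E) : Prop :=
  D.CCS F ∧ ∀ e : E, D.CCS (insert e F) → e ∈ F

/-- Comp(F): the entities whose addition keeps F complete. -/
def Comp (D : MRD E k) (F : Set E) : Set E :=
  {e | D.Complete (insert e F)}

/-- Aug(F): the entities whose addition keeps F a CCS. -/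
def Aug (D : MRD E k) (F : Set E) : Set E :=
  {e | D.CCS (insert e F)}

/-- The operator g. -/
def g (D : MRD E k) (F : Set E) : Set E :=
  {e ∈ D.Aug F | D.Comp (insert e F) = D.Comp F}

end MRD

/-!
Exchange: if `X ⊊ Y` are CCSs and `X ≠ ∅`, a path in `Y` from a point of `X` to a point of
`Y \ X` leaves `X` along some edge `{a, b}`; then `X ∪ {b}` is connected through `a` and complete
as a subset of `Y`.
Accessibility then follows from exchange alone: a maximal CCS `F ⊊ X` can be augmented inside `X`,
and by maximality the augmented set is `X` itself, so `F = X \ {e}`.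
-/

theorem Relation.ReflTransGen.exists_rel_mem_notMem {α : Type*} {r : α → α → Prop} {s : Set α}
    {a b : α} (h : Relation.ReflTransGen r a b) (ha : a ∈ s) (hb : b ∉ s) :
    ∃ x ∈ s, ∃ y ∉ s, r x y := by
  induction h with
  | refl => exact absurd ha hb
  | @tail c d _ hcd ih =>
    by_cases hc : c ∈ s
    · exact ⟨c, hc, d, hb, hcd⟩
    · exact ih hc

theorem Set.Finite.exists_diff_singleton_of_exists_insert {α : Type*} {P : Set α → Prop}
    {X : Set α} (hX : X.Finite) (hne : X.Nonempty) (hempty : P ∅)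
    (haug : ∀ F ⊂ X, P F → ∃ e ∈ X \ F, P (insert e F)) :
    ∃ e ∈ X, P (X \ {e}) := by
  have hfin : {F | P F ∧ F ⊂ X}.Finite :=
    hX.finite_subsets.subset fun F hF => hF.2.subset
  obtain ⟨F, ⟨hPF, hFX⟩, hmax⟩ :=
    hfin.exists_maximal ⟨∅, hempty, Set.empty_ssubset.mpr hne⟩
  obtain ⟨e, ⟨heX, heF⟩, hPeF⟩ := haug F hFX hPF
  have hinsert : insert e F = X := by
    by_contra hne'
    have hlt : insert e F ⊂ X := (Set.insert_subset heX hFX.subset).ssubset_of_ne hne'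
    exact heF (hmax ⟨hPeF, hlt⟩ (Set.subset_insert e F) (Set.mem_insert e F))
  refine ⟨e, heX, ?_⟩
  rwa [← hinsert, Set.insert_sdiff_self_of_notMem heF]

namespace MRD

variable {E : Type*} {k : ℕ} {D : MRD E k}

theorem Complete.mono {F G : Set E} (hG : D.Complete G) (h : F ⊆ G) : D.Complete F :=
  fun e he e' he' hrt => hG e (h he) e' (h he') hrt

theorem ccs_empty (D : MRD E k) : D.CCS ∅ :=
  ⟨fun _ he => he.elim, fun _ he => he.elim⟩

theorem ccs_singleton (D : MRD E k) (x : E) : D.CCS {x} := by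
  constructor
  · rintro e rfl e' rfl hrt
    exact absurd (Sym2.mk_isDiag_iff.mpr rfl) (D.RT_not_diag _ hrt)
  · rintro e rfl e' rfl
    exact .refl

theorem Connected.insert_of_rel {X : Set E} {a e : E} (hX : D.Connected X) (ha : a ∈ X)
    (hae : s(a, e) ∈ D.rel) : D.Connected (insert e X) := by
  set r : E → E → Prop := fun u v => u ∈ insert e X ∧ v ∈ insert e X ∧ s(u, v) ∈ D.rel
  have hpath : ∀ u ∈ X, ∀ v ∈ X, Relation.ReflTransGen r u v := fun u hu v hv =>
    Relation.ReflTransGen.mono (fun p q ⟨hp, hq, hpq⟩ =>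
      ⟨Set.mem_insert_of_mem e hp, Set.mem_insert_of_mem e hq, hpq⟩) _ _ (hX u hu v hv)
  have hae' : r a e := ⟨Set.mem_insert_of_mem e ha, Set.mem_insert e X, hae⟩
  have hea : r e a := ⟨Set.mem_insert e X, Set.mem_insert_of_mem e ha, Sym2.eq_swap ▸ hae⟩
  rintro u (rfl | hu) v (rfl | hv)
  · exact .refl
  · exact .head hea (hpath a ha v hv)
  · exact .tail (hpath u hu a ha) hae'
  · exact hpath u hu v hv

theorem CCS.exists_insert_of_ssubset {X Y : Set E} (hX : D.CCS X) (hY : D.CCS Y) (hXY : X ⊂ Y) :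
    ∃ e ∈ Y \ X, D.CCS (insert e X) := by
  obtain ⟨y, hyY, hyX⟩ := Set.exists_of_ssubset hXY
  obtain rfl | ⟨x, hx⟩ := X.eq_empty_or_nonempty
  · exact ⟨y, ⟨hyY, hyX⟩, by simpa using D.ccs_singleton y⟩
  obtain ⟨a, haX, b, hbX, -, hbY, hab⟩ :=
    (hY.2 x (hXY.subset hx) y hyY).exists_rel_mem_notMem hx hyX
  exact ⟨b, ⟨hbY, hbX⟩, hY.1.mono (Set.insert_subset hbY hXY.subset),
    hX.2.insert_of_rel haX hab⟩

end MRD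

/-- the set system of CCSs of a multi-relational database is
strongly accessible. -/
theorem ccs_strongly_accessible {E : Type*} [Fintype E] {k : ℕ} (D : MRD E k) :
    (∀ X : Set E, D.CCS X → X.Nonempty → ∃ e ∈ X, D.CCS (X \ {e})) ∧
    (∀ X Y : Set E, D.CCS X → D.CCS Y → X ⊂ Y →
      ∃ e ∈ Y \ X, D.CCS (insert e X)) :=
  ⟨fun X hX hne => X.toFinite.exists_diff_singleton_of_exists_insert hne D.ccs_empty
      fun _ hFX hF => hF.exists_insert_of_ssubset hX hFX,
    fun _ _ hX hY hXY => hX.exists_insert_of_ssubset hY hXY⟩
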